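/- There exist m ≥ 1, a classifier κ : {0,1}^m → {0,1}, a point v ∈ {0,1}^m, and a feature i ∈ F such that i is irrelevant for the instance (v, κ(v)) and yet Sv(i) ≠ 0 (existence of issue I1). -/

import Mathlib

/-- The set of points agreeing with `v` on all features in `S`. -/
def upsilon {m : ℕ} (v : Fin m → Bool) (S : Finset (Fin m)) : Set (Fin m → Bool) :=
  {x | ∀ i ∈ S, x i = v i}

/-- Weak abductive explanation: fixing the features in `S` to their values in `v`
forces the prediction to remain `κ v`. -/
def WAXp {m : ℕ} (κ : (Fin m → Bool) → Bool) (v : Fin m → Bool) (S : Finset (Fin m)) : Prop :=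
  ∀ x ∈ upsilon v S, κ x = κ v

/-- Abductive explanation: a subset-minimal weak AXp. -/
def AXp {m : ℕ} (κ : (Fin m → Bool) → Bool) (v : Fin m → Bool) (S : Finset (Fin m)) : Prop :=
  WAXp κ v S ∧ ∀ T ⊂ S, ¬ WAXp κ v T

/-- Weak contrastive explanation: freeing the features in `S` (fixing all others
to their values in `v`) allows the prediction to change. -/
def WCXp {m : ℕ} (κ : (Fin m → Bool) → Bool) (v : Fin m → Bool) (S : Finset (Fin m)) : Prop :=
  ∃ x : Fin m → Bool, (∀ i ∉ S, x i = v i) ∧ κ x ≠ κ v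

/-- Contrastive explanation: a subset-minimal weak CXp. -/
def CXp {m : ℕ} (κ : (Fin m → Bool) → Bool) (v : Fin m → Bool) (S : Finset (Fin m)) : Prop :=
  WCXp κ v S ∧ ∀ T ⊂ S, ¬ WCXp κ v T

/-- A feature is relevant if it belongs to some AXp. -/
def Relevant {m : ℕ} (κ : (Fin m → Bool) → Bool) (v : Fin m → Bool) (i : Fin m) : Prop :=
  ∃ S, AXp κ v S ∧ i ∈ S

/-- The sufficiency function `σ`: `σ s = true` iff fixing exactly the features
selected by `s` to their values in `v` forces the prediction `κ v` everywhere. -/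
def sigmaFn {m : ℕ} (κ : (Fin m → Bool) → Bool) (v : Fin m → Bool) (s : Fin m → Bool) : Bool :=
  decide (∀ x : Fin m → Bool, (∀ i : Fin m, s i = true → x i = v i) → κ x = κ v)

/-- Average value of the classifier over the points agreeing with `v` on `S`. -/
def phi {m : ℕ} (κ : (Fin m → Bool) → Bool) (v : Fin m → Bool) (S : Finset (Fin m)) : ℚ :=
  (1 / 2 ^ (m - S.card)) *
    ∑ x ∈ Finset.univ.filter (fun x : Fin m → Bool => ∀ i ∈ S, x i = v i),
      (if κ x = true then (1 : ℚ) else 0)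

/-- The Shapley value of feature `i` for the instance `(v, κ v)`. -/
def Sv {m : ℕ} (κ : (Fin m → Bool) → Bool) (v : Fin m → Bool) (i : Fin m) : ℚ :=
  ∑ S ∈ (Finset.univ.erase i).powerset,
    ((S.card.factorial : ℚ) * ((m - S.card - 1).factorial : ℚ) / (m.factorial : ℚ)) *
      (phi κ v (insert i S) - phi κ v S)

/-!
Take `κ x = x₀ ∧ x₁` at `v = (0, 1)`. Fixing `x₀ = 0` alone already forces the prediction `0`,
so every AXp is `{0}` and feature `1` is irrelevant; yet fixing `x₁ = 1` doubles the probability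
of a positive prediction, so feature `1` gets a positive Shapley value.
-/

theorem WAXp.mono {m : ℕ} {κ : (Fin m → Bool) → Bool} {v : Fin m → Bool} {S T : Finset (Fin m)}
    (hS : WAXp κ v S) (hST : S ⊆ T) : WAXp κ v T :=
  fun x hx => hS x fun i hi => hx i (hST hi)

theorem not_relevant_of_waxp_erase {m : ℕ} {κ : (Fin m → Bool) → Bool} {v : Fin m → Bool}
    {i : Fin m} (h : ∀ S, i ∈ S → WAXp κ v S → WAXp κ v (S.erase i)) : ¬ Relevant κ v i := by
  rintro ⟨S, ⟨hS, hmin⟩, hiS⟩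
  exact hmin _ (Finset.erase_ssubset hiS) (h S hiS hS)

local notation "κ₀" => fun x : Fin 2 → Bool => x 0 && x 1
local notation "v₀" => ![false, true]

theorem waxp_and_singleton_zero : WAXp κ₀ v₀ {0} := by
  intro x hx
  simp [hx 0 (Finset.mem_singleton_self 0)]

theorem zero_mem_of_waxp_and {S : Finset (Fin 2)} (hS : WAXp κ₀ v₀ S) : 0 ∈ S := by
  by_contra h0
  have hagree : ![true, true] ∈ upsilon v₀ S := by
    intro j hj
    fin_cases j
    · exact absurd hj h0
    · rfl
  simpa using hS _ hagree

theorem not_relevant_and_one : ¬ Relevant κ₀ v₀ 1 :=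
  not_relevant_of_waxp_erase fun S _ hS =>
    waxp_and_singleton_zero.mono <| Finset.singleton_subset_iff.2 <|
      Finset.mem_erase.2 ⟨by decide, zero_mem_of_waxp_and hS⟩

/- φ ∅ = 1/4, φ {1} = 1/2 and φ {0} = φ {0, 1} = 0, so only `S = ∅` contributes,
with weight 0!·1!/2! = 1/2. -/
theorem sv_and_one : Sv κ₀ v₀ 1 = 1 / 8 := by
  decide +kernel

theorem stmt15 :
    ∃ (m : ℕ) (κ : (Fin m → Bool) → Bool) (v : Fin m → Bool) (i : Fin m),
      1 ≤ m ∧ ¬ Relevant κ v i ∧ Sv κ v i ≠ 0 :=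
  ⟨2, κ₀, v₀, 1, one_le_two, not_relevant_and_one, by norm_num [sv_and_one]⟩
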